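/- If the DAG G with two-layer partition X ≺ Y has no edges among the second-layer nodes Y (i.e., the within-Y adjacency block C is zero) and P is faithful to G, then both H^(0) and H^(-j) coincide exactly with the true bipartite graph H of edges from X to Y. -/

import Mathlib

/-!
Every path into a sink `j` enters it through a parent `v` of `j`, and `v` is a non-collider
there (a collider would need an edge out of `j`). So any set containing the parents of `j` other
than `k` blocks every path from `k` to `j` except the edge `k → j` itself. Without edges inside
`Y`, each `Y_j` is a sink all of whose parents lie in `X`, so both conditioning sets contain
them, and the Markov property with faithfulness turns d-separation into independence.
-/

/-- Directed reachability in a digraph (reflexive-transitive closure of the edge relation). -/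
def Reaches {V : Type*} (G : V → V → Prop) : V → V → Prop := Relation.ReflTransGen G

/-- A digraph is acyclic if no vertex lies on a directed cycle. -/
def Acyclic {V : Type*} (G : V → V → Prop) : Prop := ∀ v, ¬ Relation.TransGen G v v

/-- `p` is an (undirected) path from `a` to `b` in the digraph `G`. -/
def IsTrail {V : Type*} (G : V → V → Prop) (a b : V) (p : List V) : Prop :=
  p.Chain' (fun x y => G x y ∨ G y x) ∧ p.head? = some a ∧ p.getLast? = some b ∧ p.Nodup

/-- Consecutive triples of a list. -/
def triples {V : Type*} : List V → List (V × V × V)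
  | x :: y :: z :: r => (x, y, z) :: triples (y :: z :: r)
  | _ => []

/-- A triple `(x, y, z)` on a path is blocked by `S` if `y` is a collider none of whose
descendants lies in `S`, or `y` is a non-collider belonging to `S`. -/
def BlockedTriple {V : Type*} [DecidableEq V] (G : V → V → Prop) (S : Finset V)
    (t : V × V × V) : Prop :=
  (G t.1 t.2.1 ∧ G t.2.2 t.2.1 ∧ ∀ d, Reaches G t.2.1 d → d ∉ S)
  ∨ (¬ (G t.1 t.2.1 ∧ G t.2.2 t.2.1) ∧ t.2.1 ∈ S)

/-- A path is blocked by `S` if some internal triple is blocked. -/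
def Blocked {V : Type*} [DecidableEq V] (G : V → V → Prop) (S : Finset V) (p : List V) : Prop :=
  ∃ t ∈ triples p, BlockedTriple G S t

/-- `S` d-separates `a` and `b` in `G` if every path between them is blocked. -/
def DSep {V : Type*} [DecidableEq V] (G : V → V → Prop) (S : Finset V) (a b : V) : Prop :=
  ∀ p : List V, IsTrail G a b p → Blocked G S p

section

variable {V : Type*}

theorem exists_mem_triples_of_isChain {R : V → V → Prop} {b : V} :
    ∀ {x y z : V} {r : List V}, (x :: y :: z :: r).IsChain R →
      (x :: y :: z :: r).getLast? = some b → ∃ c v, (c, v, b) ∈ triples (x :: y :: z :: r) ∧ R v b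
  | x, y, z, [], hchain, hlast => by
    simp only [List.getLast?_cons_cons, List.getLast?_singleton, Option.some.injEq] at hlast
    subst hlast
    simp only [List.isChain_cons_cons] at hchain
    exact ⟨x, y, by simp [triples], hchain.2.1⟩
  | x, y, z, w :: r, hchain, hlast => by
    obtain ⟨c, v, hmem, hR⟩ := exists_mem_triples_of_isChain (List.IsChain.tail hchain)
      (by simpa only [List.getLast?_cons_cons] using hlast)
    exact ⟨c, v, List.mem_cons_of_mem _ hmem, hR⟩

variable [DecidableEq V] {G : V → V → Prop} {S : Finset V} {a b : V}

theorem not_dSep_of_adj (hab : a ≠ b) (hG : G a b) : ¬ DSep G S a b := by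
  intro hsep
  obtain ⟨t, ht, -⟩ := hsep [a, b]
    ⟨List.isChain_pair.mpr (Or.inl hG), rfl, rfl, by simp [hab]⟩
  simp [triples] at ht

theorem dSep_of_sink (hsink : ∀ v, ¬ G b v) (hab : a ≠ b) (hnadj : ¬ G a b)
    (hparents : ∀ v, G v b → v ∈ S) : DSep G S a b := by
  rintro p ⟨hchain, hhead, hlast, -⟩
  match p, hchain, hhead, hlast with
  | [x], _, hhead, hlast =>
    simp only [List.head?_cons, List.getLast?_singleton, Option.some.injEq] at hhead hlast
    exact absurd (hhead.symm.trans hlast) hab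
  | [x, y], hchain, hhead, hlast =>
    simp only [List.head?_cons, List.getLast?_cons_cons, List.getLast?_singleton,
      Option.some.injEq] at hhead hlast
    subst hhead hlast
    exact ((List.isChain_pair.mp hchain).elim hnadj (hsink _)).elim
  | x :: y :: z :: r, hchain, _, hlast =>
    obtain ⟨c, v, hmem, hadj⟩ := exists_mem_triples_of_isChain hchain hlast
    have hvb : G v b := hadj.resolve_right (hsink v)
    exact ⟨(c, v, b), hmem, Or.inr ⟨fun hcol => hsink v hcol.2, hparents v hvb⟩⟩

theorem dSep_iff_not_adj_of_sink (hsink : ∀ v, ¬ G b v) (hab : a ≠ b)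
    (hparents : ∀ v, G v b → v ≠ a → v ∈ S) : DSep G S a b ↔ ¬ G a b :=
  ⟨fun hsep hG => not_dSep_of_adj hab hG hsep, fun hnadj =>
    dSep_of_sink hsink hab hnadj fun v hv => hparents v hv fun hva => hnadj (hva ▸ hv)⟩

end

theorem H0_and_Hminusj_exact_when_C_zero_general
    {V : Type*} [DecidableEq V]
    (G : V → V → Prop) (Indep : V → V → Finset V → Prop)
    (Xs Ys : Finset V)
    (hpart : ∀ v, v ∈ Xs ∨ v ∈ Ys) (hdisj : Disjoint Xs Ys)
    (horder : ∀ a ∈ Ys, ∀ b ∈ Xs, ¬ G a b)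
    (hCzero : ∀ a ∈ Ys, ∀ b ∈ Ys, ¬ G a b)
    (hMarkov : ∀ a b S, DSep G S a b → Indep a b S)
    (hFaithful : ∀ a b S, Indep a b S → DSep G S a b) :
    ∀ k ∈ Xs, ∀ j ∈ Ys,
      ((¬ Indep k j (Xs \ {k})) ↔ G k j) ∧
      ((¬ Indep k j ((Xs \ {k}) ∪ (Ys \ {j}))) ↔ G k j) := by
  intro k hk j hj
  have hkj : k ≠ j := fun h => Finset.disjoint_left.mp hdisj hk (h ▸ hj)
  have hsink : ∀ v, ¬ G j v := fun v =>
    (hpart v).elim (horder j hj v) (hCzero j hj v)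
  have hparents_mem_Xs : ∀ v, G v j → v ∈ Xs := fun v hv =>
    (hpart v).resolve_right fun hvY => hCzero v hvY j hj hv
  have exact_of_superset : ∀ S, Xs \ {k} ⊆ S → ((¬ Indep k j S) ↔ G k j) := fun S hS => by
    rw [← not_iff_not, not_not, ← dSep_iff_not_adj_of_sink hsink hkj fun v hv hvk =>
      hS (Finset.mem_sdiff.mpr ⟨hparents_mem_Xs v hv, Finset.notMem_singleton.mpr hvk⟩)]
    exact ⟨hFaithful k j S, hMarkov k j S⟩
  exact ⟨exact_of_superset _ subset_rfl, exact_of_superset _ Finset.subset_union_left⟩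

/-- if a two-layer DAG `Xs ≺ Ys` has no edges among the second-layer nodes
and the distribution is Markov and faithful to `G`, then both `H⁰` and `H^(-j)` coincide
exactly with the true bipartite graph `H` of edges from `Xs` to `Ys`. -/
theorem H0_and_Hminusj_exact_when_C_zero
    {V : Type*} [Fintype V] [DecidableEq V]
    (G : V → V → Prop) (Indep : V → V → Finset V → Prop)
    (Xs Ys : Finset V)
    (hpart : ∀ v, v ∈ Xs ∨ v ∈ Ys) (hdisj : Disjoint Xs Ys)
    (horder : ∀ a ∈ Ys, ∀ b ∈ Xs, ¬ G a b)
    (hCzero : ∀ a ∈ Ys, ∀ b ∈ Ys, ¬ G a b)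
    (hacy : Acyclic G)
    (hMarkov : ∀ a b S, DSep G S a b → Indep a b S)
    (hFaithful : ∀ a b S, Indep a b S → DSep G S a b) :
    ∀ k ∈ Xs, ∀ j ∈ Ys,
      ((¬ Indep k j (Xs \ {k})) ↔ G k j) ∧
      ((¬ Indep k j ((Xs \ {k}) ∪ (Ys \ {j}))) ↔ G k j) :=
  H0_and_Hminusj_exact_when_C_zero_general G Indep Xs Ys hpart hdisj horder hCzero hMarkov hFaithful
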